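/- Let (V, J, R) be an algebraic Kähler model of real dimension 2m with m ≥ 3. Suppose R satisfies the antisymmetry property ⟨R(X,JX)Y,JX⟩ = −⟨R(Y,JY)X,JY⟩ for all vectors X, Y ∈ V such that X, JX, Y, JY are orthonormal. Then the holomorphic sectional curvature function h(X) = ⟨R(X,JX)JX,X⟩ is constant on the set of unit vectors of V. -/

import Mathlib

open RealInnerProductSpace Module

/-- An algebraic curvature tensor on a real inner product space `V`. -/
structure CurvatureTensor (V : Type*) [NormedAddCommGroup V] [InnerProductSpace ℝ V] where
  R : V → V → V → V
  lin₁ : ∀ Y Z, IsLinearMap ℝ fun X => R X Y Z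
  lin₂ : ∀ X Z, IsLinearMap ℝ fun Y => R X Y Z
  lin₃ : ∀ X Y, IsLinearMap ℝ fun Z => R X Y Z
  antisymm₁ : ∀ X Y Z W, ⟪R X Y Z, W⟫ = -⟪R Y X Z, W⟫
  antisymm₂ : ∀ X Y Z W, ⟪R X Y Z, W⟫ = -⟪R X Y W, Z⟫
  pair_symm : ∀ X Y Z W, ⟪R X Y Z, W⟫ = ⟪R Z W X, Y⟫
  bianchi : ∀ X Y Z, R X Y Z + R Y Z X + R Z X Y = 0

/-- An algebraic Kähler model: an algebraic curvature tensor together with a compatible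
orthogonal complex structure `J`. -/
structure KahlerModel (V : Type*) [NormedAddCommGroup V] [InnerProductSpace ℝ V]
    extends CurvatureTensor V where
  J : V →ₗ[ℝ] V
  J_isometry : ∀ X Y, ⟪J X, J Y⟫ = ⟪X, Y⟫
  J_sq : ∀ X, J (J X) = -X
  R_J_invariant : ∀ X Y Z, R (J X) (J Y) Z = R X Y Z
  R_J_commute : ∀ X Y Z, R X Y (J Z) = J (R X Y Z)

/-!
Write `h` for the holomorphic sectional curvature and `a(X, Y) = ⟪R(X, JX)Y, JX⟫`. If
`X, JX, Y, JY` are orthonormal and `c² + s² = 1`, then so are `Z, JZ, W, JW` for the rotated pair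
`Z = cX + sY`, `W = -sX + cY`, and the Kähler symmetries of `R` give
`a(Z, W) + a(W, Z) = cs(c² + s²)(h(X) - h(Y)) + (c⁴ - s⁴)(a(X, Y) + a(Y, X))`.
For `c = s = 1/√2` the antisymmetry of `a` at `(Z, W)` thus forces `h(X) = h(Y)`. When `dim V ≥ 6`,
two arbitrary unit vectors `X, Y` admit a unit `u` orthogonal to `X, JX, Y, JY`, and then
`h(X) = h(u) = h(Y)`.
-/

theorem exists_norm_eq_one_forall_inner_eq_zero {V : Type*} [NormedAddCommGroup V]
    [InnerProductSpace ℝ V] [FiniteDimensional ℝ V] {n : ℕ} (v : Fin n → V)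
    (hn : n < finrank ℝ V) : ∃ u : V, ‖u‖ = 1 ∧ ∀ i, ⟪v i, u⟫ = 0 := by
  set K := Submodule.span ℝ (Set.range v)
  have hK : finrank ℝ K ≤ n := by simpa [Set.finrank] using finrank_range_le_card (R := ℝ) v
  have hpos : 0 < finrank ℝ Kᗮ := by
    have := K.finrank_add_finrank_orthogonal
    omega
  obtain ⟨⟨z, hzK⟩, hz⟩ := finrank_pos_iff_exists_ne_zero.mp hpos
  have hz0 : z ≠ 0 := by simpa using hz
  refine ⟨‖z‖⁻¹ • z, norm_smul_inv_norm hz0, fun i => ?_⟩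
  exact (K.mem_orthogonal _).mp (Kᗮ.smul_mem _ hzK) _ (Submodule.subset_span ⟨i, rfl⟩)

namespace CurvatureTensor

variable {V : Type*} [NormedAddCommGroup V] [InnerProductSpace ℝ V] (T : CurvatureTensor V)

lemma R_add_left (x y z w : V) : T.R (x + y) z w = T.R x z w + T.R y z w :=
  (T.lin₁ z w).map_add x y

lemma R_add_middle (x y z w : V) : T.R x (y + z) w = T.R x y w + T.R x z w :=
  (T.lin₂ x w).map_add y z

lemma R_add_right (x y z w : V) : T.R x y (z + w) = T.R x y z + T.R x y w :=
  (T.lin₃ x y).map_add z w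

lemma R_smul_left (a : ℝ) (x z w : V) : T.R (a • x) z w = a • T.R x z w :=
  (T.lin₁ z w).map_smul a x

lemma R_smul_middle (a : ℝ) (x y w : V) : T.R x (a • y) w = a • T.R x y w :=
  (T.lin₂ x w).map_smul a y

lemma R_smul_right (a : ℝ) (x y z : V) : T.R x y (a • z) = a • T.R x y z :=
  (T.lin₃ x y).map_smul a z

lemma R_neg_middle (x y z : V) : T.R x (-y) z = -T.R x y z := by
  simpa using T.R_smul_middle (-1) x y z

lemma R_swap (x y z : V) : T.R x y z = -T.R y x z :=
  ext_inner_right ℝ fun w => by rw [T.antisymm₁, inner_neg_left]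

end CurvatureTensor

namespace KahlerModel

variable {V : Type*} [NormedAddCommGroup V] [InnerProductSpace ℝ V] (T : KahlerModel V)

lemma inner_J_left (x y : V) : ⟪T.J x, y⟫ = -⟪x, T.J y⟫ := by
  rw [← T.J_isometry x (T.J y), T.J_sq, inner_neg_right, neg_neg]

lemma inner_J_self (x : V) : ⟪x, T.J x⟫ = 0 := by
  have h := T.inner_J_left x x
  rw [real_inner_comm] at h
  linarith

lemma inner_J_comm (x y : V) : ⟪y, T.J x⟫ = -⟪x, T.J y⟫ := by
  rw [real_inner_comm, T.inner_J_left]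

lemma norm_J (x : V) : ‖T.J x‖ = ‖x‖ := by
  rw [norm_eq_sqrt_real_inner, norm_eq_sqrt_real_inner, T.J_isometry]

lemma R_J_swap (x y z : V) : T.R x (T.J y) z = T.R y (T.J x) z := by
  rw [← T.R_J_invariant x (T.J y), T.J_sq, T.R_neg_middle, T.R_swap (T.J x), neg_neg]

lemma inner_R_J_comm (a b x y : V) : ⟪T.R a b x, T.J y⟫ = ⟪T.R a b y, T.J x⟫ := by
  rw [T.antisymm₂, T.R_J_commute, T.inner_J_left, neg_neg]

def holomorphicSectionalCurvature (x : V) : ℝ := ⟪T.R x (T.J x) (T.J x), x⟫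

def antisymmetryDefect (x y : V) : ℝ := ⟪T.R x (T.J x) y, T.J x⟫ + ⟪T.R y (T.J y) x, T.J y⟫

lemma antisymmetryDefect_rotate (x y : V) (c s : ℝ) :
    T.antisymmetryDefect (c • x + s • y) (-s • x + c • y) =
      c * s * (c ^ 2 + s ^ 2) *
          (T.holomorphicSectionalCurvature x - T.holomorphicSectionalCurvature y) +
        (c ^ 4 - s ^ 4) * T.antisymmetryDefect x y := by
  simp only [antisymmetryDefect, holomorphicSectionalCurvature, map_add, map_smul,
    T.R_add_left, T.R_add_middle, T.R_add_right, T.R_smul_left, T.R_smul_middle, T.R_smul_right,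
    inner_add_left, inner_add_right, real_inner_smul_left, real_inner_smul_right, T.R_J_swap y x]
  linear_combination c * s * (c ^ 2 + s ^ 2) * (T.pair_symm x (T.J x) y (T.J y)
    - 2 * T.inner_R_J_comm x (T.J y) x y - T.antisymm₂ x (T.J x) (T.J x) x
    + T.antisymm₂ y (T.J y) (T.J y) y)

lemma orthonormal_J_iff {x y : V} : Orthonormal ℝ ![x, T.J x, y, T.J y] ↔
    ⟪x, x⟫ = 1 ∧ ⟪y, y⟫ = 1 ∧ ⟪x, y⟫ = 0 ∧ ⟪x, T.J y⟫ = 0 := by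
  rw [orthonormal_iff_ite]
  constructor
  · intro h
    exact ⟨by simpa using h 0 0, by simpa using h 2 2, by simpa using h 0 2, by simpa using h 0 3⟩
  · rintro ⟨hx, hy, hxy, hxJy⟩ i j
    have hnx : ‖x‖ = 1 := by rw [norm_eq_sqrt_real_inner, hx, Real.sqrt_one]
    have hny : ‖y‖ = 1 := by rw [norm_eq_sqrt_real_inner, hy, Real.sqrt_one]
    have hyJx : ⟪y, T.J x⟫ = 0 := by rw [T.inner_J_comm, hxJy, neg_zero]
    fin_cases i <;> fin_cases j <;>
      simp [T.norm_J, T.J_isometry, T.inner_J_self, T.inner_J_left, real_inner_comm, hnx, hny,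
        hxy, hxJy, hyJx]

lemma orthonormal_rotate {x y : V} (h : Orthonormal ℝ ![x, T.J x, y, T.J y]) {c s : ℝ}
    (hcs : c ^ 2 + s ^ 2 = 1) :
    Orthonormal ℝ ![c • x + s • y, T.J (c • x + s • y), -s • x + c • y, T.J (-s • x + c • y)] := by
  obtain ⟨hx, hy, hxy, hxJy⟩ := T.orthonormal_J_iff.mp h
  have hyJx : ⟪y, T.J x⟫ = 0 := by rw [T.inner_J_comm, hxJy, neg_zero]
  rw [orthonormal_J_iff]
  simp only [map_add, map_smul, inner_add_left, inner_add_right, real_inner_smul_left,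
    real_inner_smul_right, real_inner_comm x y, hx, hy, hxy, hxJy, hyJx, T.inner_J_self]
  exact ⟨by linear_combination hcs, by linear_combination hcs, by ring, by ring⟩

lemma holomorphicSectionalCurvature_eq_of_orthonormal
    (hanti : ∀ X Y : V, Orthonormal ℝ ![X, T.J X, Y, T.J Y] →
      ⟪T.R X (T.J X) Y, T.J X⟫ = -⟪T.R Y (T.J Y) X, T.J Y⟫)
    {x y : V} (h : Orthonormal ℝ ![x, T.J x, y, T.J y]) :
    T.holomorphicSectionalCurvature x = T.holomorphicSectionalCurvature y := by
  set c : ℝ := (√2)⁻¹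
  have hc : c ^ 2 + c ^ 2 = 1 := by
    rw [inv_pow, Real.sq_sqrt zero_le_two]
    norm_num
  have hzero : T.antisymmetryDefect (c • x + c • y) (-c • x + c • y) = 0 :=
    eq_neg_iff_add_eq_zero.mp (hanti _ _ (T.orthonormal_rotate h hc))
  have hrot := T.antisymmetryDefect_rotate x y c c
  rw [hzero, sub_self, zero_mul, add_zero] at hrot
  have hc0 : c * c * (c ^ 2 + c ^ 2) ≠ 0 := by positivity
  exact sub_eq_zero.mp ((mul_eq_zero.mp hrot.symm).resolve_left hc0)

end KahlerModel

theorem constant_holomorphic_of_antisymmetry {V : Type*} [NormedAddCommGroup V] [InnerProductSpace ℝ V] [FiniteDimensional ℝ V]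
    (T : KahlerModel V) (m : ℕ) (hm : 3 ≤ m) (hdim : finrank ℝ V = 2 * m)
    (hanti : ∀ X Y : V, Orthonormal ℝ ![X, T.J X, Y, T.J Y] →
      ⟪T.R X (T.J X) Y, T.J X⟫ = -⟪T.R Y (T.J Y) X, T.J Y⟫) :
    ∀ X Y : V, ‖X‖ = 1 → ‖Y‖ = 1 →
      ⟪T.R X (T.J X) (T.J X), X⟫ = ⟪T.R Y (T.J Y) (T.J Y), Y⟫ := by
  intro X Y hX hY
  obtain ⟨u, hu, hperp⟩ :=
    exists_norm_eq_one_forall_inner_eq_zero ![X, T.J X, Y, T.J Y] (by omega)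
  have h_eq_u : ∀ Z, ‖Z‖ = 1 → ⟪Z, u⟫ = 0 → ⟪T.J Z, u⟫ = 0 →
      T.holomorphicSectionalCurvature Z = T.holomorphicSectionalCurvature u := by
    intro Z hZ hZu hJZu
    rw [T.inner_J_left, neg_eq_zero] at hJZu
    exact T.holomorphicSectionalCurvature_eq_of_orthonormal hanti <| T.orthonormal_J_iff.mpr
      ⟨inner_self_eq_one_of_norm_eq_one hZ, inner_self_eq_one_of_norm_eq_one hu, hZu, hJZu⟩
  exact (h_eq_u X hX (hperp 0) (hperp 1)).trans (h_eq_u Y hY (hperp 2) (hperp 3)).symm
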